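/- Let 0 < β < 1, let Q be a cube of side length l(Q) in ℝⁿ, and let R_j = {z : 2^j l(Q) ≤ |z - x| ≤ 2^{j+1} l(Q)} for a fixed x ∈ ℝⁿ. For any C¹ function g supported in (3/2)R_j with ‖g‖_∞ ≤ A (2^j l(Q))^{-m} and ‖∇g‖_∞ ≤ A (2^j l(Q))^{-m-1} for some integer 0 ≤ m ≤ n, one has ∫_{(2R_j)^c} |(g * |z|^{-(n+1-β)})(y)| dy ≤ C A (2^j l(Q))^{n - m - 1 + β}, where C = C(n, β). -/

import Mathlib

open MeasureTheory Metric Filter Topology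

noncomputable section

/-- The axis-parallel cube with center `c` and side length `l`. -/
def cube (n : ℕ) (c : EuclideanSpace ℝ (Fin n)) (l : ℝ) : Set (EuclideanSpace ℝ (Fin n)) :=
  {x | ∀ i, |x i - c i| ≤ l / 2}

/-- The i-th component of the α-Riesz kernel. -/
def K (n : ℕ) (α : ℝ) (i : Fin n) (x : EuclideanSpace ℝ (Fin n)) : ℝ :=
  x i / ‖x‖ ^ (1 + α)

/-- Partial derivative in direction i. -/
def pd {n : ℕ} (i : Fin n) (f : EuclideanSpace ℝ (Fin n) → ℝ) :
    EuclideanSpace ℝ (Fin n) → ℝ :=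
  fun x => fderiv ℝ f x (EuclideanSpace.single i 1)

/-- Multi-index partial derivative ∂^s. -/
def mderiv {n : ℕ} (s : Fin n → ℕ) (f : EuclideanSpace ℝ (Fin n) → ℝ) :
    EuclideanSpace ℝ (Fin n) → ℝ :=
  (List.finRange n).foldr (fun i g => (pd i)^[s i] g) f

/-- Order |s| of a multi-index. -/
def deg {n : ℕ} (s : Fin n → ℕ) : ℕ := ∑ i, s i
/-- The closed annulus centered at `x` with radii `r ≤ R`. -/
def annulus (n : ℕ) (x : EuclideanSpace ℝ (Fin n)) (r R : ℝ) :
    Set (EuclideanSpace ℝ (Fin n)) :=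
  {z | r ≤ ‖z - x‖ ∧ ‖z - x‖ ≤ R}

/-! For `y` outside the doubled annulus, every point of the support of `g` is at distance at
least `(‖y - x‖ + r) / 9` from `y`, so the inner integral is at most
`‖g‖_∞ · |B(x, 3r)| · 9^p (‖y - x‖ + r)^(-p)`. As `p = n + 1 - β > n` this majorant is integrable
in `y`, and scaling by `r` gives `∫ (‖y - x‖ + r)^(-p) dy = r^(n - p) ∫ (1 + ‖w‖)^(-p) dw`.
Together with `‖g‖_∞ ≤ A r^(-m)` and `|B(x, 3r)| = (3r)^n |B(0, 1)|` this is `A r^(n - m - 1 + β)`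
up to a constant. -/

open Module

theorem norm_sub_add_div_nine_le_norm_sub {E : Type*} [SeminormedAddCommGroup E] {x y z : E}
    {r : ℝ} (hz : 2 / 3 * r ≤ ‖z - x‖ ∧ ‖z - x‖ ≤ 3 * r)
    (hy : ¬(1 / 2 * r ≤ ‖y - x‖ ∧ ‖y - x‖ ≤ 4 * r)) :
    (‖y - x‖ + r) / 9 ≤ ‖y - z‖ := by
  have h₁ := norm_sub_le_norm_sub_add_norm_sub y z x
  have h₂ := norm_sub_le_norm_sub_add_norm_sub z y x
  rw [norm_sub_rev z y] at h₂
  rcases not_and_or.1 hy with h | h <;> push Not at h <;> linarith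

theorem abs_integral_mul_le_of_support_subset {X : Type*} [MeasurableSpace X] {μ : Measure X}
    {s : Set X} (hs : μ s < ⊤) {g k : X → ℝ} {a b : ℝ} (hsupp : Function.support g ⊆ s)
    (hg : ∀ z, |g z| ≤ a) (hk : ∀ z ∈ s, |k z| ≤ b) :
    |∫ z, g z * k z ∂μ| ≤ a * b * μ.real s := by
  have hzero : ∀ z ∉ s, g z * k z = 0 := fun z hz => by
    rw [Function.notMem_support.1 (fun h => hz (hsupp h)), zero_mul]
  rw [← setIntegral_eq_integral_of_forall_compl_eq_zero hzero, ← Real.norm_eq_abs]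
  refine norm_setIntegral_le_of_norm_le_const hs fun z hz => ?_
  rw [Real.norm_eq_abs, abs_mul]
  exact mul_le_mul (hg z) (hk z hz) (abs_nonneg _) ((abs_nonneg _).trans (hg z))

theorem add_rpow_neg_eq_rpow_neg_mul_one_add {p r : ℝ} (hr : 0 < r) {t : ℝ} (ht : 0 ≤ t) :
    (t + r) ^ (-p) = r ^ (-p) * (1 + r⁻¹ * t) ^ (-p) := by
  rw [← Real.mul_rpow hr.le (by positivity), mul_add, mul_one, ← mul_assoc,
    mul_inv_cancel₀ hr.ne', one_mul, add_comm]

theorem abs_integral_mul_rpow_neg_norm_sub_le {E : Type*} [NormedAddCommGroup E] [ProperSpace E]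
    [MeasurableSpace E] {μ : Measure E} [IsFiniteMeasureOnCompacts μ] {p r a : ℝ} (hp : 0 ≤ p)
    (hr : 0 < r) {x y : E} {g : E → ℝ}
    (hsupp : Function.support g ⊆ {z | 2 / 3 * r ≤ ‖z - x‖ ∧ ‖z - x‖ ≤ 3 * r})
    (hg : ∀ z, |g z| ≤ a) (hy : ¬(1 / 2 * r ≤ ‖y - x‖ ∧ ‖y - x‖ ≤ 4 * r)) :
    |∫ z, g z * ‖y - z‖ ^ (-p) ∂μ| ≤
      a * (9 ^ p * (‖y - x‖ + r) ^ (-p)) * μ.real (closedBall x (3 * r)) := by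
  have hball : {z | 2 / 3 * r ≤ ‖z - x‖ ∧ ‖z - x‖ ≤ 3 * r} ⊆ closedBall x (3 * r) :=
    fun z hz => mem_closedBall_iff_norm.2 hz.2
  have hkernel : ∀ z ∈ {z | 2 / 3 * r ≤ ‖z - x‖ ∧ ‖z - x‖ ≤ 3 * r},
      |‖y - z‖ ^ (-p)| ≤ 9 ^ p * (‖y - x‖ + r) ^ (-p) := fun z hz => by
    have hpos : 0 < (‖y - x‖ + r) / 9 := by positivity
    calc |‖y - z‖ ^ (-p)| = ‖y - z‖ ^ (-p) := abs_of_nonneg (by positivity)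
      _ ≤ ((‖y - x‖ + r) / 9) ^ (-p) := Real.rpow_le_rpow_of_nonpos hpos
          (norm_sub_add_div_nine_le_norm_sub hz hy) (neg_nonpos.2 hp)
      _ = 9 ^ p * (‖y - x‖ + r) ^ (-p) := by
          rw [Real.div_rpow (by positivity) (by norm_num),
            Real.rpow_neg (by norm_num : (0 : ℝ) ≤ 9), div_inv_eq_mul, mul_comm]
  have ha : 0 ≤ a := (abs_nonneg _).trans (hg x)
  refine (abs_integral_mul_le_of_support_subset
    ((measure_mono hball).trans_lt measure_closedBall_lt_top) hsupp hg hkernel).trans ?_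
  gcongr
  exact measure_closedBall_lt_top.ne

section Haar

variable {E : Type*} [NormedAddCommGroup E] [NormedSpace ℝ E] [FiniteDimensional ℝ E]
  [MeasurableSpace E] [BorelSpace E] (μ : Measure E) [μ.IsAddHaarMeasure]

theorem integrable_rpow_neg_norm_sub_add {p r : ℝ} (hp : finrank ℝ E < p) (hr : 0 < r) (x : E) :
    Integrable (fun y => (‖y - x‖ + r) ^ (-p)) μ := by
  have h := ((integrable_one_add_norm (μ := μ) hp).comp_smul (inv_ne_zero hr.ne')).const_mul
    (r ^ (-p))
  refine (h.congr (Filter.Eventually.of_forall fun y => ?_)).comp_sub_right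
    (f := fun y => (‖y‖ + r) ^ (-p)) x
  simp only [norm_smul, norm_inv, Real.norm_of_nonneg hr.le]
  exact (add_rpow_neg_eq_rpow_neg_mul_one_add hr (norm_nonneg y)).symm

theorem integral_rpow_neg_norm_sub_add (p : ℝ) {r : ℝ} (hr : 0 < r) (x : E) :
    ∫ y, (‖y - x‖ + r) ^ (-p) ∂μ = r ^ (finrank ℝ E - p) * ∫ w, (1 + ‖w‖) ^ (-p) ∂μ := by
  have hscale := Measure.integral_comp_inv_smul_of_nonneg μ (fun w : E => (1 + ‖w‖) ^ (-p)) hr.le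
  simp only [norm_smul, norm_inv, Real.norm_of_nonneg hr.le, smul_eq_mul] at hscale
  rw [integral_sub_right_eq_self (fun y => (‖y‖ + r) ^ (-p)) x]
  simp only [add_rpow_neg_eq_rpow_neg_mul_one_add hr (norm_nonneg _)]
  rw [integral_const_mul, hscale, Real.rpow_sub hr, Real.rpow_neg hr.le, Real.rpow_natCast]
  ring

theorem setIntegral_compl_abs_integral_mul_rpow_neg_norm_sub_le {p r a : ℝ}
    (hp : finrank ℝ E < p) (hr : 0 < r) (x : E) {g : E → ℝ}
    (hsupp : Function.support g ⊆ {z | 2 / 3 * r ≤ ‖z - x‖ ∧ ‖z - x‖ ≤ 3 * r})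
    (hg : ∀ z, |g z| ≤ a) :
    ∫ y in {y | 1 / 2 * r ≤ ‖y - x‖ ∧ ‖y - x‖ ≤ 4 * r}ᶜ, |∫ z, g z * ‖y - z‖ ^ (-p) ∂μ| ∂μ ≤
      9 ^ p * 3 ^ finrank ℝ E * μ.real (closedBall 0 1) * (∫ w, (1 + ‖w‖) ^ (-p) ∂μ) * a *
        r ^ (2 * finrank ℝ E - p) := by
  have hS : MeasurableSet {y | 1 / 2 * r ≤ ‖y - x‖ ∧ ‖y - x‖ ≤ 4 * r}ᶜ := by measurability
  have ha : 0 ≤ a := (abs_nonneg _).trans (hg x)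
  have hmaj : Integrable
      (fun y => a * (9 ^ p * (‖y - x‖ + r) ^ (-p)) * μ.real (closedBall x (3 * r))) μ :=
    (((integrable_rpow_neg_norm_sub_add μ hp hr x).const_mul _).const_mul _).mul_const _
  have hpow : r ^ (finrank ℝ E - p) * (3 * r) ^ finrank ℝ E =
      3 ^ finrank ℝ E * r ^ (2 * finrank ℝ E - p) := by
    rw [mul_pow, ← Real.rpow_natCast r, two_mul, add_sub_assoc, Real.rpow_add hr]
    ring
  calc _ ≤ ∫ y in {y | 1 / 2 * r ≤ ‖y - x‖ ∧ ‖y - x‖ ≤ 4 * r}ᶜ,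
        a * (9 ^ p * (‖y - x‖ + r) ^ (-p)) * μ.real (closedBall x (3 * r)) ∂μ :=
        integral_mono_of_nonneg (Filter.Eventually.of_forall fun _ => abs_nonneg _)
          hmaj.integrableOn (ae_restrict_of_forall_mem hS fun y hy =>
            abs_integral_mul_rpow_neg_norm_sub_le ((Nat.cast_nonneg _).trans hp.le) hr
              hsupp hg hy)
    _ ≤ ∫ y, a * (9 ^ p * (‖y - x‖ + r) ^ (-p)) * μ.real (closedBall x (3 * r)) ∂μ :=
        setIntegral_le_integral hmaj (Filter.Eventually.of_forall fun _ => by positivity)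
    _ = _ := by
        rw [integral_mul_const, integral_const_mul, integral_const_mul,
          integral_rpow_neg_norm_sub_add μ p hr x,
          Measure.addHaar_real_closedBall' μ x (by positivity)]
        linear_combination 9 ^ p * a * μ.real (closedBall (0 : E) 1) *
          (∫ w, (1 + ‖w‖) ^ (-p) ∂μ) * hpow

end Haar

theorem annulus_convolution_tail_estimate_general (n : ℕ) (β : ℝ)
    (hβ1 : β < 1) :
    ∃ C > (0:ℝ), ∀ (x : EuclideanSpace ℝ (Fin n)) (l : ℝ), 0 < l →
      ∀ (j : ℤ) (m : ℕ), m ≤ n → ∀ A : ℝ, 0 ≤ A →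
      ∀ g : EuclideanSpace ℝ (Fin n) → ℝ, ContDiff ℝ 1 g →
      tsupport g ⊆ annulus n x ((2/3) * ((2:ℝ)^j * l)) ((3/2) * ((2:ℝ)^(j+1) * l)) →
      (∀ z, |g z| ≤ A * ((2:ℝ)^j * l) ^ (-(m:ℝ))) →
      (∀ z, ‖fderiv ℝ g z‖ ≤ A * ((2:ℝ)^j * l) ^ (-((m:ℝ) + 1))) →
      ∫ y in (annulus n x ((1/2) * ((2:ℝ)^j * l)) (2 * ((2:ℝ)^(j+1) * l)))ᶜ,
          |∫ z, g z * ‖y - z‖ ^ (-((n:ℝ) + 1 - β))| ≤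
        C * A * ((2:ℝ)^j * l) ^ ((n:ℝ) - m - 1 + β) := by
  set p : ℝ := n + 1 - β
  have hp : (finrank ℝ (EuclideanSpace ℝ (Fin n)) : ℝ) < p := by
    rw [finrank_euclideanSpace_fin]; linarith
  set C₀ : ℝ := 9 ^ p * 3 ^ n * volume.real (closedBall (0 : EuclideanSpace ℝ (Fin n)) 1) *
    ∫ w : EuclideanSpace ℝ (Fin n), (1 + ‖w‖) ^ (-p)
  refine ⟨C₀ + 1, by positivity, fun x l hl j m _ A hA g _ hsupp hg _ => ?_⟩
  set r : ℝ := 2 ^ j * l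
  have hr : 0 < r := by positivity
  have hdouble : (2 : ℝ) ^ (j + 1) * l = 2 * r := by rw [zpow_add_one₀ two_ne_zero]; ring
  rw [hdouble, show 3 / 2 * (2 * r) = 3 * r by ring] at hsupp
  rw [hdouble, show 2 * (2 * r) = 4 * r by ring]
  have htail := setIntegral_compl_abs_integral_mul_rpow_neg_norm_sub_le volume hp hr x
    ((subset_tsupport g).trans hsupp) hg
  rw [finrank_euclideanSpace_fin] at htail
  calc _ ≤ C₀ * (A * r ^ (-(m : ℝ))) * r ^ (2 * (n : ℝ) - p) := htail
    _ = C₀ * A * r ^ ((n : ℝ) - m - 1 + β) := by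
      have hexp : (-(m : ℝ)) + (2 * n - p) = n - m - 1 + β := by ring
      rw [← hexp, Real.rpow_add hr]
      ring
    _ ≤ (C₀ + 1) * A * r ^ ((n : ℝ) - m - 1 + β) := by gcongr; linarith

/-- Tail estimate for the convolution of a function supported on the dyadic
annulus R_j with the kernel |z|^{-(n+1-β)}, outside the doubled annulus. -/
theorem annulus_convolution_tail_estimate (n : ℕ) (β : ℝ) (hn : 0 < n)
    (hβ : 0 < β) (hβ1 : β < 1) :
    ∃ C > (0:ℝ), ∀ (x : EuclideanSpace ℝ (Fin n)) (l : ℝ), 0 < l →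
      ∀ (j : ℤ) (m : ℕ), m ≤ n → ∀ A : ℝ, 0 ≤ A →
      ∀ g : EuclideanSpace ℝ (Fin n) → ℝ, ContDiff ℝ 1 g →
      tsupport g ⊆ annulus n x ((2/3) * ((2:ℝ)^j * l)) ((3/2) * ((2:ℝ)^(j+1) * l)) →
      (∀ z, |g z| ≤ A * ((2:ℝ)^j * l) ^ (-(m:ℝ))) →
      (∀ z, ‖fderiv ℝ g z‖ ≤ A * ((2:ℝ)^j * l) ^ (-((m:ℝ) + 1))) →
      ∫ y in (annulus n x ((1/2) * ((2:ℝ)^j * l)) (2 * ((2:ℝ)^(j+1) * l)))ᶜ,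
          |∫ z, g z * ‖y - z‖ ^ (-((n:ℝ) + 1 - β))| ≤
        C * A * ((2:ℝ)^j * l) ^ ((n:ℝ) - m - 1 + β) :=
  annulus_convolution_tail_estimate_general n β hβ1
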